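/- arXiv:1411.1027 — 3 statements merged into one kernel-verified Lean document; each statement's English description precedes it below -/
import Mathlib

section
/- Let Z be a (G,H)-equivalence. The map [z,w] \mapsto {}_G[z,w] from the imprimitivity groupoid Z^H to G is a groupoid isomorphism, where {}_G[z,w] is the unique element of G with {}_G[z,w]\cdot w = z. -/
universe u v w u' v'

/-- An (algebraic) groupoid: a set of arrows `Γ` over a unit space `U`, with range, source,
unit, partially-defined multiplication (totalized, with axioms only for composable pairs)
and inversion. -/
structure Gpd (Γ : Type u) (U : Type v) where
  r : Γ → U
  s : Γ → U
  e : U → Γ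
  mul : Γ → Γ → Γ
  inv : Γ → Γ
  r_e : ∀ u, r (e u) = u
  s_e : ∀ u, s (e u) = u
  r_mul : ∀ x y, s x = r y → r (mul x y) = r x
  s_mul : ∀ x y, s x = r y → s (mul x y) = s y
  mul_assoc : ∀ x y z, s x = r y → s y = r z → mul (mul x y) z = mul x (mul y z)
  e_mul : ∀ x, mul (e (r x)) x = x
  mul_e : ∀ x, mul x (e (s x)) = x
  r_inv : ∀ x, r (inv x) = s x
  s_inv : ∀ x, s (inv x) = r x
  inv_mul : ∀ x, mul (inv x) x = e (s x)
  mul_inv : ∀ x, mul x (inv x) = e (r x)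

/-- A right action of a groupoid `H` on a set `Z`, via a moment map `σ : Z → H⁽⁰⁾`. -/
structure RAction {Λ : Type u} {V : Type v} (H : Gpd Λ V) (Z : Type w) where
  σ : Z → V
  act : Z → Λ → Z
  σ_act : ∀ z η, σ z = H.r η → σ (act z η) = H.s η
  act_e : ∀ z, act z (H.e (σ z)) = z
  act_mul : ∀ z η ξ, σ z = H.r η → H.s η = H.r ξ →
    act z (H.mul η ξ) = act (act z η) ξ

/-- Freeness of a right action. -/
def RAction.Free {Λ : Type u} {V : Type v} {H : Gpd Λ V} {Z : Type w}
    (R : RAction H Z) : Prop :=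
  ∀ z η, R.σ z = H.r η → R.act z η = z → η = H.e (R.σ z)

/-- A `(G,H)`-equivalence in the purely algebraic sense: a set `Z` with free commuting
left `G`- and right `H`-actions such that `ρ` induces a bijection `Z/H ≅ G⁽⁰⁾` and
`σ` induces a bijection `G\Z ≅ H⁽⁰⁾`. -/
structure GpdEquiv {Γ : Type u} {U : Type v} {Λ : Type u'} {V : Type v'}
    (G : Gpd Γ U) (H : Gpd Λ V) (Z : Type w) where
  ρ : Z → U
  σ : Z → V
  lact : Γ → Z → Z
  ract : Z → Λ → Z
  ρ_lact : ∀ γ z, G.s γ = ρ z → ρ (lact γ z) = G.r γ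
  σ_lact : ∀ γ z, G.s γ = ρ z → σ (lact γ z) = σ z
  lact_e : ∀ z, lact (G.e (ρ z)) z = z
  lact_mul : ∀ γ η z, G.s η = ρ z → G.s γ = G.r η →
    lact (G.mul γ η) z = lact γ (lact η z)
  lfree : ∀ γ z, G.s γ = ρ z → lact γ z = z → γ = G.e (ρ z)
  σ_ract : ∀ z η, σ z = H.r η → σ (ract z η) = H.s η
  ρ_ract : ∀ z η, σ z = H.r η → ρ (ract z η) = ρ z
  ract_e : ∀ z, ract z (H.e (σ z)) = z
  ract_mul : ∀ z η ξ, σ z = H.r η → H.s η = H.r ξ →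
    ract z (H.mul η ξ) = ract (ract z η) ξ
  rfree : ∀ z η, σ z = H.r η → ract z η = z → η = H.e (σ z)
  comm : ∀ γ z η, G.s γ = ρ z → σ z = H.r η →
    ract (lact γ z) η = lact γ (ract z η)
  ρ_inj : ∀ z w, ρ z = ρ w → ∃ η, σ z = H.r η ∧ ract z η = w
  ρ_surj : ∀ u, ∃ z, ρ z = u
  σ_inj : ∀ z w, σ z = σ w → ∃ γ, G.s γ = ρ z ∧ lact γ z = w
  σ_surj : ∀ v, ∃ z, σ z = v

variable {Γ : Type u} {U : Type v} {Λ : Type u} {V : Type v} {Z : Type w}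

/-- The right `H`-action underlying a `(G,H)`-equivalence. -/
def GpdEquiv.toRAction {G : Gpd Γ U} {H : Gpd Λ V} (E : GpdEquiv G H Z) :
    RAction H Z where
  σ := E.σ
  act := E.ract
  σ_act := E.σ_ract
  act_e := E.ract_e
  act_mul := E.ract_mul

/-- Pairs `(z,w)` with `σ z = σ w`, i.e. `Z *_s Z`. -/
def PairZ {H : Gpd Λ V} (R : RAction H Z) : Type w :=
  { p : Z × Z // R.σ p.1 = R.σ p.2 }

/-- The diagonal `H`-orbit relation on `Z *_s Z`. -/
def relPair {H : Gpd Λ V} (R : RAction H Z) (p q : PairZ R) : Prop :=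
  ∃ η, R.σ p.1.1 = H.r η ∧ q.1.1 = R.act p.1.1 η ∧ q.1.2 = R.act p.1.2 η

/-- The `H`-orbit relation on `Z`. -/
def relOrb {H : Gpd Λ V} (R : RAction H Z) (z w : Z) : Prop :=
  ∃ η, R.σ z = H.r η ∧ w = R.act z η

/-- The class of `(z,w)` in `Z^H = (Z *_s Z)/H`. -/
def mkP {H : Gpd Λ V} (R : RAction H Z) (z w : Z) (h : R.σ z = R.σ w) :
    Quot (relPair R) :=
  Quot.mk _ ⟨(z, w), h⟩

/-- The class of `z` in `Z/H`. -/
def mkO {H : Gpd Λ V} (R : RAction H Z) (z : Z) : Quot (relOrb R) :=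
  Quot.mk _ z

/-- Freeness of the left action: an element of `G` is determined by what it does
to a single point. -/
theorem lact_cancel {G : Gpd Γ U} {H : Gpd Λ V} (E : GpdEquiv G H Z)
    {γ γ' : Γ} {z : Z} (h : G.s γ = E.ρ z) (h' : G.s γ' = E.ρ z)
    (heq : E.lact γ z = E.lact γ' z) : γ = γ' := by
  have hr : G.r γ = G.r γ' := by
    rw [← E.ρ_lact γ z h, ← E.ρ_lact γ' z h', heq]
  have hc1 : G.s (G.inv γ') = G.r γ := by rw [G.s_inv, hr]
  have hδ : E.lact (G.mul (G.inv γ') γ) z = z := by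
    rw [E.lact_mul _ _ _ h hc1, heq, ← E.lact_mul _ _ _ h' (by rw [G.s_inv]),
      G.inv_mul, h', E.lact_e]
  have hs : G.s (G.mul (G.inv γ') γ) = E.ρ z := by rw [G.s_mul _ _ hc1, h]
  have hfree := E.lfree _ z hs hδ
  symm
  calc γ' = G.mul γ' (G.e (G.s γ')) := (G.mul_e γ').symm
    _ = G.mul γ' (G.mul (G.inv γ') γ) := by rw [h', ← hfree]
    _ = G.mul (G.mul γ' (G.inv γ')) γ :=
        (G.mul_assoc _ _ _ (G.r_inv γ').symm hc1).symm
    _ = G.mul (G.e (G.r γ')) γ := by rw [G.mul_inv]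
    _ = γ := by rw [← hr, G.e_mul]

/-- `ρ` is invariant under the `H`-orbit relation, hence descends to `Z/H`. -/
theorem mkO_rho {G : Gpd Γ U} {H : Gpd Λ V} (E : GpdEquiv G H Z) {w z : Z}
    (h : mkO E.toRAction w = mkO E.toRAction z) : E.ρ w = E.ρ z :=
  congrArg (Quot.lift E.ρ (fun a b hab => by
    obtain ⟨η, h1, h2⟩ := hab
    subst h2
    exact (E.ρ_ract a η h1).symm)) h

/-- Every element of `Z^H` has the form `mkP z w h`. -/
theorem mkP_rep {G : Gpd Γ U} {H : Gpd Λ V} (E : GpdEquiv G H Z)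
    (a : Quot (relPair E.toRAction)) :
    ∃ z w h, a = mkP E.toRAction z w h := by
  obtain ⟨⟨⟨z, w⟩, hzw⟩, rfl⟩ := Quot.exists_rep a
  exact ⟨z, w, hzw, rfl⟩

/-- For a `(G,H)`-equivalence `Z`, the map `[z,w] ↦ {}_G[z,w]` is a
groupoid isomorphism of the imprimitivity groupoid `Z^H` onto `G`, where `{}_G[z,w]` is
the unique element of `G` with `{}_G[z,w] ⬝ w = z`. -/
theorem imprimitivity_groupoid_iso (G : Gpd Γ U) (H : Gpd Λ V) (E : GpdEquiv G H Z)
    (L : Gpd (Quot (relPair E.toRAction)) (Quot (relOrb E.toRAction)))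
    -- `L` is the imprimitivity groupoid `Z^H`:
    (hLr : ∀ z w h, L.r (mkP E.toRAction z w h) = mkO E.toRAction z)
    (hLs : ∀ z w h, L.s (mkP E.toRAction z w h) = mkO E.toRAction w)
    (hLe : ∀ z, L.e (mkO E.toRAction z) = mkP E.toRAction z z rfl)
    (hLmul : ∀ z w y (h₁ : E.σ z = E.σ w) (h₂ : E.σ w = E.σ y),
      L.mul (mkP E.toRAction z w h₁) (mkP E.toRAction w y h₂) =
        mkP E.toRAction z y (h₁.trans h₂))
    (hLinv : ∀ z w h, L.inv (mkP E.toRAction z w h) = mkP E.toRAction w z h.symm)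
    -- `Φ` is the map `[z,w] ↦ {}_G[z,w]`:
    (Φ : Quot (relPair E.toRAction) → Γ)
    (hΦ : ∀ z w (h : E.σ z = E.σ w),
      G.s (Φ (mkP E.toRAction z w h)) = E.ρ w ∧ E.lact (Φ (mkP E.toRAction z w h)) w = z) :
    Function.Bijective Φ ∧
      (∀ a b, L.s a = L.r b → G.s (Φ a) = G.r (Φ b)) ∧
      (∀ a b, L.s a = L.r b → Φ (L.mul a b) = G.mul (Φ a) (Φ b)) ∧
      (∀ a, Φ (L.inv a) = G.inv (Φ a)) := by
  -- `Φ (mkP z w h)` is the unique `γ` with `s γ = ρ w` and `γ ⬝ w = z`.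
  have key : ∀ z w (h : E.σ z = E.σ w) (γ : Γ), G.s γ = E.ρ w → E.lact γ w = z →
      Φ (mkP E.toRAction z w h) = γ := fun z w h γ hs hγ =>
    lact_cancel E (hΦ z w h).1 hs ((hΦ z w h).2.trans hγ.symm)
  refine ⟨⟨?_, ?_⟩, ?_, ?_, ?_⟩
  · -- injectivity
    intro a b hab
    obtain ⟨z, w, h, rfl⟩ := mkP_rep E a
    obtain ⟨z', w', h', rfl⟩ := mkP_rep E b
    obtain ⟨hs1, he1⟩ := hΦ z w h
    obtain ⟨hs2, he2⟩ := hΦ z' w' h'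
    rw [hab] at hs1 he1
    have hww' : E.ρ w = E.ρ w' := hs1.symm.trans hs2
    obtain ⟨η, hη1, hη2⟩ := E.ρ_inj w w' hww'
    have hz : E.ract z η = z' := by
      calc E.ract z η = E.ract (E.lact (Φ (mkP E.toRAction z' w' h')) w) η := by
            rw [he1]
        _ = E.lact (Φ (mkP E.toRAction z' w' h')) (E.ract w η) :=
            E.comm _ w η hs1 hη1
        _ = E.lact (Φ (mkP E.toRAction z' w' h')) w' := by rw [hη2]
        _ = z' := he2
    exact Quot.sound ⟨η, h.trans hη1, hz.symm, hη2.symm⟩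
  · -- surjectivity
    intro γ
    obtain ⟨z, hz⟩ := E.ρ_surj (G.s γ)
    exact ⟨mkP E.toRAction (E.lact γ z) z (E.σ_lact γ z hz.symm),
      key _ _ _ γ hz.symm rfl⟩
  · -- compatibility with source and range
    intro a b hab
    obtain ⟨z, w, h, rfl⟩ := mkP_rep E a
    obtain ⟨z', w', h', rfl⟩ := mkP_rep E b
    rw [hLs, hLr] at hab
    have hρ : E.ρ w = E.ρ z' := mkO_rho E hab
    exact ((hΦ z w h).1.trans hρ).trans
      ((E.ρ_lact _ w' (hΦ z' w' h').1).symm.trans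
        (congrArg E.ρ (hΦ z' w' h').2)).symm
  · -- multiplicativity
    intro a b hab
    obtain ⟨z, w, h, rfl⟩ := mkP_rep E a
    obtain ⟨z', w', h', rfl⟩ := mkP_rep E b
    rw [hLs, hLr] at hab
    have hρ : E.ρ w = E.ρ z' := mkO_rho E hab
    obtain ⟨η, hη1, hη2⟩ := E.ρ_inj w z' hρ
    have hσz : E.σ (E.ract z η) = E.σ z' := by
      rw [E.σ_ract z η (h.trans hη1), ← hη2, E.σ_ract w η hη1]
    have haeq : mkP E.toRAction z w h = mkP E.toRAction (E.ract z η) z' hσz :=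
      Quot.sound ⟨η, h.trans hη1, rfl, hη2.symm⟩
    rw [haeq, hLmul (E.ract z η) z' w' hσz h']
    have hcomp : G.s (Φ (mkP E.toRAction (E.ract z η) z' hσz)) =
        G.r (Φ (mkP E.toRAction z' w' h')) :=
      (hΦ _ _ hσz).1.trans
        ((E.ρ_lact _ w' (hΦ z' w' h').1).symm.trans
          (congrArg E.ρ (hΦ z' w' h').2)).symm
    refine key _ _ _ _ ((G.s_mul _ _ hcomp).trans (hΦ z' w' h').1) ?_
    rw [E.lact_mul _ _ _ (hΦ z' w' h').1 hcomp, (hΦ z' w' h').2]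
    exact (hΦ _ _ hσz).2
  · -- compatibility with inversion
    intro a
    obtain ⟨z, w, h, rfl⟩ := mkP_rep E a
    rw [hLinv]
    refine key w z h.symm (G.inv (Φ (mkP E.toRAction z w h)))
      ((G.s_inv _).trans ((E.ρ_lact _ w (hΦ z w h).1).symm.trans
        (congrArg E.ρ (hΦ z w h).2))) ?_
    calc E.lact (G.inv (Φ (mkP E.toRAction z w h))) z
        = E.lact (G.inv (Φ (mkP E.toRAction z w h)))
            (E.lact (Φ (mkP E.toRAction z w h)) w) := by
          exact congrArg _ (hΦ z w h).2.symm
      _ = E.lact (G.mul (G.inv (Φ (mkP E.toRAction z w h)))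
            (Φ (mkP E.toRAction z w h))) w :=
          (E.lact_mul _ _ _ (hΦ z w h).1 (G.s_inv _)).symm
      _ = w := by rw [G.inv_mul, (hΦ z w h).1, E.lact_e]
end

section
/- Let Z be a (G,H)-equivalence. Define L = G \sqcup Z \sqcup Z^{op} \sqcup H with unit space G^{(0)} \sqcup H^{(0)}, multiplication given by the groupoid operations on G and H, the actions of G and H on Z and Z^{op}, the pairings z\bar w = {}_G[z,w] and \bar z w = [z,w]_H, and inversion z^{-1} = \bar z. Then L is a groupoid (the linking groupoid), containing G and H as full subgroupoids: G = L|_{G^{(0)}} and H = L|_{H^{(0)}}. -/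
universe u v w u' v'

section Linking

variable {Γ : Type u} {U : Type v} {Λ : Type u} {V : Type v} {Z : Type w}

/-- The underlying set `G ⊔ Z ⊔ Z^op ⊔ H` of the linking groupoid. -/
def LSet (Γ Λ Z : Type _) : Type _ := (Γ ⊕ Z) ⊕ (Z ⊕ Λ)

/-- Inclusion of `G` into the linking set. -/
def iG (γ : Γ) : LSet Γ Λ Z := Sum.inl (Sum.inl γ)
/-- Inclusion of `Z` into the linking set. -/
def iZ (z : Z) : LSet Γ Λ Z := Sum.inl (Sum.inr z)
/-- Inclusion of `Z^op` into the linking set. -/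
def iZop (z : Z) : LSet Γ Λ Z := Sum.inr (Sum.inl z)
/-- Inclusion of `H` into the linking set. -/
def iH (η : Λ) : LSet Γ Λ Z := Sum.inr (Sum.inr η)

/-- `L` is a linking groupoid for the `(G,H)`-equivalence `Z`: its operations restrict to
those of `G` and `H`, to the actions of `G` and `H` on `Z` and `Z^op`, and to the pairings
`z w̄ = {}_G[z,w]`, `z̄ w = [z,w]_H`; inversion on `Z` is `z ↦ z̄`; and `G` and `H` are the
reductions of `L` to `G⁽⁰⁾` and `H⁽⁰⁾`. -/
structure IsLinking (G : Gpd Γ U) (H : Gpd Λ V) (E : GpdEquiv G H Z)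
    (L : Gpd (LSet Γ Λ Z) (U ⊕ V)) : Prop where
  rG : ∀ γ, L.r (iG γ) = Sum.inl (G.r γ)
  sG : ∀ γ, L.s (iG γ) = Sum.inl (G.s γ)
  rZ : ∀ z, L.r (iZ z) = Sum.inl (E.ρ z)
  sZ : ∀ z, L.s (iZ z) = Sum.inr (E.σ z)
  rZop : ∀ z, L.r (iZop z) = Sum.inr (E.σ z)
  sZop : ∀ z, L.s (iZop z) = Sum.inl (E.ρ z)
  rH : ∀ η, L.r (iH η) = Sum.inr (H.r η)
  sH : ∀ η, L.s (iH η) = Sum.inr (H.s η)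
  eU : ∀ u, L.e (Sum.inl u) = iG (G.e u)
  eV : ∀ v, L.e (Sum.inr v) = iH (H.e v)
  mulGG : ∀ γ γ', G.s γ = G.r γ' → L.mul (iG γ) (iG γ') = iG (G.mul γ γ')
  mulGZ : ∀ γ z, G.s γ = E.ρ z → L.mul (iG γ) (iZ z) = iZ (E.lact γ z)
  mulZH : ∀ z η, E.σ z = H.r η → L.mul (iZ z) (iH η) = iZ (E.ract z η)
  mulHZop : ∀ η z, H.s η = E.σ z → L.mul (iH η) (iZop z) = iZop (E.ract z (H.inv η))
  mulZopG : ∀ z γ, E.ρ z = G.r γ → L.mul (iZop z) (iG γ) = iZop (E.lact (G.inv γ) z)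
  mulHH : ∀ η η', H.s η = H.r η' → L.mul (iH η) (iH η') = iH (H.mul η η')
  mulZZop : ∀ z w γ, E.σ z = E.σ w → G.s γ = E.ρ w → E.lact γ w = z →
    L.mul (iZ z) (iZop w) = iG γ
  mulZopZ : ∀ z w η, E.ρ z = E.ρ w → E.σ z = H.r η → E.ract z η = w →
    L.mul (iZop z) (iZ w) = iH η
  invG : ∀ γ, L.inv (iG γ) = iG (G.inv γ)
  invH : ∀ η, L.inv (iH η) = iH (H.inv η)
  invZ : ∀ z : Z, L.inv (iZ z) = iZop z
  invZop : ∀ z : Z, L.inv (iZop z) = iZ z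
  fullG : ∀ x u u', L.r x = Sum.inl u → L.s x = Sum.inl u' → ∃ γ, x = iG γ
  fullH : ∀ x v v', L.r x = Sum.inr v → L.s x = Sum.inr v' → ∃ η, x = iH η

end Linking

section LinkConstruction

variable {Γ : Type u} {U : Type v} {Λ : Type u} {V : Type v} {Z : Type w}
variable {G : Gpd Γ U} {H : Gpd Λ V}

open Classical

theorem Gpd.inv_e' (G : Gpd Γ U) (u : U) : G.inv (G.e u) = G.e u := by
  have h1 : G.mul (G.inv (G.e u)) (G.e u) = G.e u := by
    rw [G.inv_mul, G.s_e]
  have h2 : G.mul (G.inv (G.e u)) (G.e u) = G.inv (G.e u) := by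
    have := G.mul_e (G.inv (G.e u))
    rwa [G.s_inv, G.r_e] at this
  rw [← h2, h1]

theorem Gpd.inv_mul_of (G : Gpd Γ U) {x y : Γ} (h : G.s x = G.r y) :
    G.inv (G.mul x y) = G.mul (G.inv y) (G.inv x) := by
  have hqc : G.s (G.inv y) = G.r (G.inv x) := by rw [G.s_inv, G.r_inv, h]
  have hpq : G.mul (G.mul x y) (G.mul (G.inv y) (G.inv x)) = G.e (G.r x) := by
    rw [G.mul_assoc x y _ h (by rw [G.r_mul _ _ hqc, G.r_inv])]
    rw [← G.mul_assoc y (G.inv y) (G.inv x) (G.r_inv y).symm hqc]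
    rw [G.mul_inv y, ← h, ← G.r_inv x, G.e_mul, G.mul_inv]
  have h1 : G.mul (G.inv (G.mul x y))
      (G.mul (G.mul x y) (G.mul (G.inv y) (G.inv x))) = G.inv (G.mul x y) := by
    rw [hpq, ← G.r_mul x y h, ← G.s_inv (G.mul x y), G.mul_e]
  rw [← G.mul_assoc (G.inv (G.mul x y)) (G.mul x y)
      (G.mul (G.inv y) (G.inv x)) (G.s_inv _)
      (by rw [G.s_mul x y h, G.r_mul _ _ hqc, G.r_inv])] at h1
  rw [G.inv_mul, G.s_mul x y h, ← G.r_inv y,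
    ← G.r_mul (G.inv y) (G.inv x) hqc, G.e_mul] at h1
  exact h1.symm

/-- helpers for actions and inverses -/
theorem GpdEquiv.ract_act_inv (E : GpdEquiv G H Z) {z : Z} {η : Λ}
    (h : E.σ z = H.r η) : E.ract (E.ract z η) (H.inv η) = z := by
  rw [← E.ract_mul z η (H.inv η) h (H.r_inv η).symm, H.mul_inv, ← h, E.ract_e]

theorem GpdEquiv.ract_inv_act (E : GpdEquiv G H Z) {z : Z} {η : Λ}
    (h : E.σ z = H.s η) : E.ract (E.ract z (H.inv η)) η = z := by
  rw [← E.ract_mul z (H.inv η) η (by rw [H.r_inv]; exact h) (H.s_inv η),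
    H.inv_mul, ← h, E.ract_e]

theorem GpdEquiv.lact_inv_act (E : GpdEquiv G H Z) {γ : Γ} {z : Z}
    (h : G.s γ = E.ρ z) : E.lact (G.inv γ) (E.lact γ z) = z := by
  rw [← E.lact_mul (G.inv γ) γ z h (G.s_inv γ), G.inv_mul, h, E.lact_e]

theorem GpdEquiv.lact_act_inv (E : GpdEquiv G H Z) {γ : Γ} {z : Z}
    (h : G.r γ = E.ρ z) : E.lact γ (E.lact (G.inv γ) z) = z := by
  rw [← E.lact_mul γ (G.inv γ) z (by rw [G.s_inv]; exact h) (G.r_inv γ).symm,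
    G.mul_inv, h, E.lact_e]

/-- The pairing `[z,w]_G`: the unique `γ` with `γ • w = z`, when `σ z = σ w`. -/
noncomputable def GpdEquiv.pairG (E : GpdEquiv G H Z) (z w : Z) : Γ :=
  if h : E.σ w = E.σ z then (E.σ_inj w z h).choose else (E.σ_inj w w rfl).choose

theorem GpdEquiv.pairG_s (E : GpdEquiv G H Z) {z w : Z} (h : E.σ z = E.σ w) :
    G.s (E.pairG z w) = E.ρ w := by
  rw [GpdEquiv.pairG, dif_pos h.symm]; exact (E.σ_inj w z h.symm).choose_spec.1

theorem GpdEquiv.pairG_act (E : GpdEquiv G H Z) {z w : Z} (h : E.σ z = E.σ w) :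
    E.lact (E.pairG z w) w = z := by
  rw [GpdEquiv.pairG, dif_pos h.symm]; exact (E.σ_inj w z h.symm).choose_spec.2

theorem GpdEquiv.pairG_r (E : GpdEquiv G H Z) {z w : Z} (h : E.σ z = E.σ w) :
    G.r (E.pairG z w) = E.ρ z := by
  rw [← E.ρ_lact _ _ (E.pairG_s h), E.pairG_act h]

theorem GpdEquiv.pairG_unique (E : GpdEquiv G H Z) {z w : Z} {γ : Γ}
    (hs : G.s γ = E.ρ w) (ha : E.lact γ w = z) : E.pairG z w = γ := by
  have hσ : E.σ z = E.σ w := by rw [← ha, E.σ_lact _ _ hs]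
  have hbs := E.pairG_s hσ
  have hba := E.pairG_act hσ
  have hbr := E.pairG_r hσ
  have hγr : G.r γ = E.ρ z := by rw [← ha, E.ρ_lact _ _ hs]
  have hc1 : G.s (G.inv γ) = G.r (E.pairG z w) := by rw [G.s_inv, hγr, hbr]
  have key : E.lact (G.mul (G.inv γ) (E.pairG z w)) w = w := by
    rw [E.lact_mul _ _ _ hbs hc1, hba, ← ha, E.lact_inv_act hs]
  have hms : G.s (G.mul (G.inv γ) (E.pairG z w)) = E.ρ w := by
    rw [G.s_mul _ _ hc1, hbs]
  have hfree := E.lfree _ _ hms key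
  have hμ : G.mul γ (G.mul (G.inv γ) (E.pairG z w)) = γ := by
    rw [hfree, ← hs, G.mul_e]
  calc E.pairG z w = G.mul (G.e (G.r (E.pairG z w))) (E.pairG z w) :=
        (G.e_mul _).symm
    _ = G.mul (G.e (G.r γ)) (E.pairG z w) := by rw [hbr, hγr]
    _ = G.mul (G.mul γ (G.inv γ)) (E.pairG z w) := by rw [G.mul_inv]
    _ = G.mul γ (G.mul (G.inv γ) (E.pairG z w)) :=
        G.mul_assoc _ _ _ (G.r_inv γ).symm hc1
    _ = γ := hμ

/-- The pairing `[z,w]_H`: the unique `η` with `z • η = w`, when `ρ z = ρ w`. -/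
noncomputable def GpdEquiv.pairH (E : GpdEquiv G H Z) (z w : Z) : Λ :=
  if h : E.ρ z = E.ρ w then (E.ρ_inj z w h).choose else (E.ρ_inj z z rfl).choose

theorem GpdEquiv.pairH_r (E : GpdEquiv G H Z) {z w : Z} (h : E.ρ z = E.ρ w) :
    E.σ z = H.r (E.pairH z w) := by
  rw [GpdEquiv.pairH, dif_pos h]; exact (E.ρ_inj z w h).choose_spec.1

theorem GpdEquiv.pairH_act (E : GpdEquiv G H Z) {z w : Z} (h : E.ρ z = E.ρ w) :
    E.ract z (E.pairH z w) = w := by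
  rw [GpdEquiv.pairH, dif_pos h]; exact (E.ρ_inj z w h).choose_spec.2

theorem GpdEquiv.pairH_s (E : GpdEquiv G H Z) {z w : Z} (h : E.ρ z = E.ρ w) :
    H.s (E.pairH z w) = E.σ w := by
  rw [← E.σ_ract _ _ (E.pairH_r h), E.pairH_act h]

theorem GpdEquiv.pairH_unique (E : GpdEquiv G H Z) {z w : Z} {η : Λ}
    (hr : E.σ z = H.r η) (ha : E.ract z η = w) : E.pairH z w = η := by
  have hρ : E.ρ z = E.ρ w := by rw [← ha, E.ρ_ract _ _ hr]
  have hbr := E.pairH_r hρ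
  have hba := E.pairH_act hρ
  have hbs := E.pairH_s hρ
  have hηs : H.s η = E.σ w := by rw [← ha, E.σ_ract _ _ hr]
  have hc1 : H.s (H.inv η) = H.r (E.pairH z w) := by rw [H.s_inv, ← hr, hbr]
  have hwr : E.σ w = H.r (H.inv η) := by rw [H.r_inv, hηs]
  have key : E.ract w (H.mul (H.inv η) (E.pairH z w)) = w := by
    rw [E.ract_mul _ _ _ hwr hc1]
    have hz : E.ract w (H.inv η) = z := by rw [← ha]; exact E.ract_act_inv hr
    rw [hz, hba]
  have hmr : E.σ w = H.r (H.mul (H.inv η) (E.pairH z w)) := by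
    rw [H.r_mul _ _ hc1, H.r_inv, hηs]
  have hfree := E.rfree _ _ hmr key
  have hμ : H.mul η (H.mul (H.inv η) (E.pairH z w)) = η := by
    rw [hfree, ← hηs, H.mul_e]
  calc E.pairH z w = H.mul (H.e (H.r (E.pairH z w))) (E.pairH z w) :=
        (H.e_mul _).symm
    _ = H.mul (H.e (H.r η)) (E.pairH z w) := by rw [← hbr, hr]
    _ = H.mul (H.mul η (H.inv η)) (E.pairH z w) := by rw [H.mul_inv]
    _ = H.mul η (H.mul (H.inv η) (E.pairH z w)) :=
        H.mul_assoc _ _ _ (H.r_inv η).symm hc1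
    _ = η := hμ

def Lr (E : GpdEquiv G H Z) : LSet Γ Λ Z → U ⊕ V
  | .inl (.inl γ) => .inl (G.r γ)
  | .inl (.inr z) => .inl (E.ρ z)
  | .inr (.inl z) => .inr (E.σ z)
  | .inr (.inr η) => .inr (H.r η)

def Ls (E : GpdEquiv G H Z) : LSet Γ Λ Z → U ⊕ V
  | .inl (.inl γ) => .inl (G.s γ)
  | .inl (.inr z) => .inr (E.σ z)
  | .inr (.inl z) => .inl (E.ρ z)
  | .inr (.inr η) => .inr (H.s η)

def Le (G : Gpd Γ U) (H : Gpd Λ V) : U ⊕ V → LSet Γ Λ Z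
  | .inl u => iG (G.e u)
  | .inr v => iH (H.e v)

def Linv (_E : GpdEquiv G H Z) : LSet Γ Λ Z → LSet Γ Λ Z
  | .inl (.inl γ) => iG (G.inv γ)
  | .inl (.inr z) => iZop z
  | .inr (.inl z) => iZ z
  | .inr (.inr η) => iH (H.inv η)

noncomputable def Lmul (E : GpdEquiv G H Z) :
    LSet Γ Λ Z → LSet Γ Λ Z → LSet Γ Λ Z
  | .inl (.inl γ), .inl (.inl γ') => iG (G.mul γ γ')
  | .inl (.inl γ), .inl (.inr z) => iZ (E.lact γ z)
  | .inl (.inl γ), .inr _ => iG γ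
  | .inl (.inr z), .inr (.inr η) => iZ (E.ract z η)
  | .inl (.inr z), .inr (.inl w) => iG (E.pairG z w)
  | .inl (.inr z), .inl _ => iZ z
  | .inr (.inl z), .inl (.inl γ) => iZop (E.lact (G.inv γ) z)
  | .inr (.inl z), .inl (.inr w) => iH (E.pairH z w)
  | .inr (.inl z), .inr _ => iZop z
  | .inr (.inr η), .inr (.inr η') => iH (H.mul η η')
  | .inr (.inr η), .inr (.inl z) => iZop (E.ract z (H.inv η))
  | .inr (.inr η), .inl _ => iH η

noncomputable def linkGpd (G : Gpd Γ U) (H : Gpd Λ V) (E : GpdEquiv G H Z) :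
    Gpd (LSet Γ Λ Z) (U ⊕ V) where
  r := Lr E
  s := Ls E
  e := Le G H
  mul := Lmul E
  inv := Linv E
  r_e := fun u => by
    rcases u with u | v
    · simp only [Le, Lr, iG, G.r_e]
    · simp only [Le, Lr, iH, H.r_e]
  s_e := fun u => by
    rcases u with u | v
    · simp only [Le, Ls, iG, G.s_e]
    · simp only [Le, Ls, iH, H.s_e]
  r_mul := fun x y h => by
    rcases x with ((a|z)|(z|a)) <;> rcases y with ((b|w)|(w|b)) <;>
      simp only [Lmul, Lr, Ls, iG, iZ, iZop, iH, Sum.inl.injEq, Sum.inr.injEq,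
        reduceCtorEq] at h ⊢
    · exact G.r_mul a b h
    · exact E.ρ_lact a w h
    · exact E.pairG_r h
    · exact E.ρ_ract z b h
    · exact E.σ_lact (G.inv b) z (by rw [G.s_inv]; exact h.symm)
    · exact (E.pairH_r h).symm
    · rw [E.σ_ract w (H.inv a) (by rw [H.r_inv]; exact h.symm), H.s_inv]
    · exact H.r_mul a b h
  s_mul := fun x y h => by
    rcases x with ((a|z)|(z|a)) <;> rcases y with ((b|w)|(w|b)) <;>
      simp only [Lmul, Lr, Ls, iG, iZ, iZop, iH, Sum.inl.injEq, Sum.inr.injEq,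
        reduceCtorEq] at h ⊢
    · exact G.s_mul a b h
    · exact E.σ_lact a w h
    · exact E.pairG_s h
    · exact E.σ_ract z b h
    · rw [E.ρ_lact (G.inv b) z (by rw [G.s_inv]; exact h.symm), G.r_inv]
    · exact E.pairH_s h
    · exact E.ρ_ract w (H.inv a) (by rw [H.r_inv]; exact h.symm)
    · exact H.s_mul a b h
  mul_assoc := fun p q t h1 h2 => by
    rcases p with ((a|z)|(z|a)) <;> rcases q with ((b|w)|(w|b)) <;>
      rcases t with ((c|x)|(x|c)) <;>
      simp only [LSet, Lmul, Lr, Ls, iG, iZ, iZop, iH, Sum.inl.injEq, Sum.inr.injEq,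
        reduceCtorEq] at h1 h2 ⊢
    · -- G G G
      exact G.mul_assoc a b c h1 h2
    · -- G G Z
      exact E.lact_mul a b x h2 h1
    · -- G Z Zop
      refine E.pairG_unique ?_ ?_
      · rw [G.s_mul a _ (h1.trans (E.pairG_r h2).symm), E.pairG_s h2]
      · rw [E.lact_mul a _ x (E.pairG_s h2) (h1.trans (E.pairG_r h2).symm),
          E.pairG_act h2]
    · -- G Z H
      exact E.comm a w c h1 h2
    · -- Z Zop G
      symm
      have hcw : G.s (G.inv c) = E.ρ w := by rw [G.s_inv]; exact h2.symm
      have hρl : E.ρ (E.lact (G.inv c) w) = G.s c := by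
        rw [E.ρ_lact _ _ hcw, G.r_inv]
      refine E.pairG_unique ?_ ?_
      · rw [G.s_mul _ c ((E.pairG_s h1).trans h2), hρl]
      · rw [E.lact_mul _ c _ hρl.symm ((E.pairG_s h1).trans h2),
          E.lact_act_inv h2.symm, E.pairG_act h1]
    · -- Z Zop Z
      calc E.lact (E.pairG z w) x
          = E.lact (E.pairG z w) (E.ract w (E.pairH w x)) := by
            rw [E.pairH_act h2]
        _ = E.ract (E.lact (E.pairG z w) w) (E.pairH w x) :=
            (E.comm _ _ _ (E.pairG_s h1) (E.pairH_r h2)).symm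
        _ = E.ract z (E.pairH w x) := by rw [E.pairG_act h1]
    · -- Z H Zop
      have hw : E.σ x = H.r (H.inv b) := by rw [H.r_inv]; exact h2.symm
      have hσ : E.σ z = E.σ (E.ract x (H.inv b)) := by
        rw [E.σ_ract _ _ hw, H.s_inv]; exact h1
      have hσ2 : E.σ (E.ract x (H.inv b)) = H.r b := by
        rw [E.σ_ract _ _ hw, H.s_inv]
      refine E.pairG_unique ?_ ?_
      · rw [E.pairG_s hσ, E.ρ_ract _ _ hw]
      · calc E.lact (E.pairG z (E.ract x (H.inv b))) x
            = E.lact (E.pairG z (E.ract x (H.inv b)))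
                (E.ract (E.ract x (H.inv b)) b) := by
              rw [E.ract_inv_act h2.symm]
          _ = E.ract (E.lact (E.pairG z (E.ract x (H.inv b)))
                (E.ract x (H.inv b))) b :=
              (E.comm _ _ _ (E.pairG_s hσ) hσ2).symm
          _ = E.ract z b := by rw [E.pairG_act hσ]
    · -- Z H H
      exact (E.ract_mul z b c h1 h2).symm
    · -- Zop G G
      rw [G.inv_mul_of h2,
        E.lact_mul _ _ _ (by rw [G.s_inv]; exact h1.symm)
          (by rw [G.s_inv, G.r_inv]; exact h2.symm)]
    · -- Zop G Z
      have hρ : E.ρ z = E.ρ (E.lact b x) := by rw [E.ρ_lact _ _ h2]; exact h1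
      have hbz : G.s (G.inv b) = E.ρ z := by rw [G.s_inv]; exact h1.symm
      refine E.pairH_unique ?_ ?_
      · rw [E.σ_lact _ _ hbz]; exact E.pairH_r hρ
      · rw [E.comm _ _ _ hbz (E.pairH_r hρ), E.pairH_act hρ, E.lact_inv_act h2]
    · -- Zop Z Zop
      have h3 : G.s (G.inv (E.pairG w x)) = E.ρ z := by
        rw [G.s_inv, E.pairG_r h2, ← h1]
      have key : E.ract (E.lact (G.inv (E.pairG w x)) z) (E.pairH z w) = x := by
        rw [E.comm _ _ _ h3 (E.pairH_r h1), E.pairH_act h1]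
        calc E.lact (G.inv (E.pairG w x)) w
            = E.lact (G.inv (E.pairG w x)) (E.lact (E.pairG w x) x) := by
              rw [E.pairG_act h2]
          _ = x := E.lact_inv_act (E.pairG_s h2)
      calc E.ract x (H.inv (E.pairH z w))
          = E.ract (E.ract (E.lact (G.inv (E.pairG w x)) z) (E.pairH z w))
              (H.inv (E.pairH z w)) := by rw [key]
        _ = E.lact (G.inv (E.pairG w x)) z :=
            E.ract_act_inv (by rw [E.σ_lact _ _ h3]; exact E.pairH_r h1)
    · -- Zop Z H
      symm
      refine E.pairH_unique ?_ ?_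
      · rw [H.r_mul _ c ((E.pairH_s h1).trans h2)]; exact E.pairH_r h1
      · rw [E.ract_mul z _ c (E.pairH_r h1) ((E.pairH_s h1).trans h2),
          E.pairH_act h1]
    · -- H Zop G
      exact (E.comm _ _ _ (by rw [G.s_inv]; exact h2.symm)
        (by rw [H.r_inv]; exact h1.symm)).symm
    · -- H Zop Z
      have hw : E.σ w = H.r (H.inv a) := by rw [H.r_inv]; exact h1.symm
      refine E.pairH_unique ?_ ?_
      · rw [E.σ_ract _ _ hw, H.s_inv,
          H.r_mul a _ (h1.trans (E.pairH_r h2))]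
      · rw [E.ract_mul _ a _ (by rw [E.σ_ract _ _ hw, H.s_inv])
            (h1.trans (E.pairH_r h2)),
          E.ract_inv_act h1.symm, E.pairH_act h2]
    · -- H H Zop
      rw [H.inv_mul_of h1,
        E.ract_mul x _ _ (by rw [H.r_inv]; exact h2.symm)
          (by rw [H.s_inv, H.r_inv]; exact h1.symm)]
    · -- H H H
      exact H.mul_assoc a b c h1 h2
  e_mul := fun x => by
    rcases x with ((a|z)|(z|a)) <;>
      simp only [Lmul, Lr, Le, iG, iZ, iZop, iH]
    · rw [G.e_mul]
    · rw [E.lact_e]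
    · rw [H.inv_e', E.ract_e]
    · rw [H.e_mul]
  mul_e := fun x => by
    rcases x with ((a|z)|(z|a)) <;>
      simp only [Lmul, Ls, Le, iG, iZ, iZop, iH]
    · rw [G.mul_e]
    · rw [E.ract_e]
    · rw [G.inv_e', E.lact_e]
    · rw [H.mul_e]
  r_inv := fun x => by
    rcases x with ((a|z)|(z|a)) <;>
      simp only [Linv, Lr, Ls, iG, iZ, iZop, iH]
    · rw [G.r_inv]
    · rw [H.r_inv]
  s_inv := fun x => by
    rcases x with ((a|z)|(z|a)) <;>
      simp only [Linv, Lr, Ls, iG, iZ, iZop, iH]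
    · rw [G.s_inv]
    · rw [H.s_inv]
  inv_mul := fun x => by
    rcases x with ((a|z)|(z|a)) <;>
      simp only [Linv, Lmul, Ls, Le, iG, iZ, iZop, iH]
    · rw [G.inv_mul]
    · rw [E.pairH_unique (H.r_e (E.σ z)).symm (E.ract_e z)]
    · rw [E.pairG_unique (G.s_e (E.ρ z)) (E.lact_e z)]
    · rw [H.inv_mul]
  mul_inv := fun x => by
    rcases x with ((a|z)|(z|a)) <;>
      simp only [Linv, Lmul, Lr, Le, iG, iZ, iZop, iH]
    · rw [G.mul_inv]
    · rw [E.pairG_unique (G.s_e (E.ρ z)) (E.lact_e z)]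
    · rw [E.pairH_unique (H.r_e (E.σ z)).symm (E.ract_e z)]
    · rw [H.mul_inv]

end LinkConstruction

/-- Given a `(G,H)`-equivalence `Z`, the disjoint union
`L = G ⊔ Z ⊔ Z^op ⊔ H` carries a groupoid structure with unit space `G⁽⁰⁾ ⊔ H⁽⁰⁾` whose
operations are the groupoid operations of `G` and `H`, the actions of `G` and `H` on `Z`
and `Z^op`, and the pairings `z w̄ = {}_G[z,w]`, `z̄ w = [z,w]_H`, with inversion
`z⁻¹ = z̄`; moreover `G` and `H` are full subgroupoids: `G = L|_{G⁽⁰⁾}` and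
`H = L|_{H⁽⁰⁾}`. -/
theorem linking_groupoid_exists {Γ : Type u} {U : Type v} {Λ : Type u} {V : Type v}
    {Z : Type w} (G : Gpd Γ U) (H : Gpd Λ V) (E : GpdEquiv G H Z) :
    ∃ L : Gpd (LSet Γ Λ Z) (U ⊕ V), IsLinking G H E L := by
  refine ⟨linkGpd G H E, ?_⟩
  refine
    { rG := fun _ => rfl
      sG := fun _ => rfl
      rZ := fun _ => rfl
      sZ := fun _ => rfl
      rZop := fun _ => rfl
      sZop := fun _ => rfl
      rH := fun _ => rfl
      sH := fun _ => rfl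
      eU := fun _ => rfl
      eV := fun _ => rfl
      mulGG := fun _ _ _ => rfl
      mulGZ := fun _ _ _ => rfl
      mulZH := fun _ _ _ => rfl
      mulHZop := fun _ _ _ => rfl
      mulZopG := fun _ _ _ => rfl
      mulHH := fun _ _ _ => rfl
      mulZZop := fun z w γ _ h2 h3 => congrArg iG (E.pairG_unique h2 h3)
      mulZopZ := fun z w η _ h2 h3 => congrArg iH (E.pairH_unique h2 h3)
      invG := fun _ => rfl
      invH := fun _ => rfl
      invZ := fun _ => rfl
      invZop := fun _ => rfl
      fullG := ?_
      fullH := ?_ }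
  · intro x u u' hr hs
    rcases x with ((g|z)|(z|h))
    · exact ⟨g, rfl⟩
    · simp only [linkGpd, Ls, reduceCtorEq] at hs
    · simp only [linkGpd, Lr, reduceCtorEq] at hr
    · simp only [linkGpd, Lr, reduceCtorEq] at hr
  · intro x v v' hr hs
    rcases x with ((g|z)|(z|h))
    · simp only [linkGpd, Lr, reduceCtorEq] at hr
    · simp only [linkGpd, Lr, reduceCtorEq] at hr
    · simp only [linkGpd, Ls, reduceCtorEq] at hs
    · exact ⟨h, rfl⟩
end

section
/- Let Z be a (G,H)-equivalence with linking groupoid L. The set X = s_L^{-1}(G^{(0)}) equals G \sqcup Z^{op}, and with the natural left L-action and right G-action, X is an (L,G)-equivalence. -/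
universe u v w u' v'

/-- The inclusion of `X = G ⊔ Z^op` into the linking set. -/
def iX {Γ Λ Z : Type _} (x : Γ ⊕ Z) : LSet Γ Λ Z := Sum.elim iG iZop x

section AuxProof

variable {Γ : Type u} {U : Type v} {Λ : Type u} {V : Type v} {Z : Type w}
variable {G : Gpd Γ U} {H : Gpd Λ V} {E : GpdEquiv G H Z}
variable {L : Gpd (LSet Γ Λ Z) (U ⊕ V)}

/-- The moment map `X → G⁽⁰⁾`. -/
def sigX (G : Gpd Γ U) (E : GpdEquiv G H Z) : Γ ⊕ Z → U := Sum.elim G.s E.ρ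

lemma iX_inj : Function.Injective (iX : Γ ⊕ Z → LSet Γ Λ Z) := by
  intro a b h
  cases a <;> cases b
  · exact congrArg Sum.inl (Sum.inl.inj (Sum.inl.inj h))
  · injection h
  · injection h
  · exact congrArg Sum.inr (Sum.inl.inj (Sum.inr.inj h))

lemma sX (hL : IsLinking G H E L) (x : Γ ⊕ Z) :
    L.s (iX x) = Sum.inl (sigX G E x) := by
  cases x with
  | inl γ => exact hL.sG γ
  | inr z => exact hL.sZop z

lemma closureX (hL : IsLinking G H E L) (a : LSet Γ Λ Z) (u : U)
    (hs : L.s a = Sum.inl u) : ∃ x : Γ ⊕ Z, iX x = a := by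
  rcases hr : L.r a with u' | v
  · obtain ⟨γ, rfl⟩ := hL.fullG a u' u hr hs
    exact ⟨Sum.inl γ, rfl⟩
  · obtain ⟨z, hz⟩ := E.σ_surj v
    have hcomp : L.s (iZ z) = L.r a := by rw [hL.sZ, hz, hr]
    have hrb : L.r (L.mul (iZ z) a) = Sum.inl (E.ρ z) := by
      rw [L.r_mul _ _ hcomp, hL.rZ]
    have hsb : L.s (L.mul (iZ z) a) = Sum.inl u := by
      rw [L.s_mul _ _ hcomp, hs]
    obtain ⟨γ, hγ⟩ := hL.fullG _ _ _ hrb hsb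
    have hρ : E.ρ z = G.r γ := by
      rw [hγ, hL.rG] at hrb
      exact (Sum.inl.inj hrb).symm
    refine ⟨Sum.inr (E.lact (G.inv γ) z), ?_⟩
    have h1 : L.mul (iZop z) (iG γ) = iZop (E.lact (G.inv γ) z) := hL.mulZopG z γ hρ
    have h2 : L.mul (iZop z) (L.mul (iZ z) a) = a := by
      have hc1 : L.s (iZop z) = L.r (iZ z) := by rw [hL.sZop, hL.rZ]
      rw [← L.mul_assoc _ _ _ hc1 hcomp]
      have h3 : L.mul (iZop z) (iZ z) = L.e (L.s (iZ z)) := by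
        rw [← hL.invZ, L.inv_mul]
      rw [h3, hL.sZ, hz, ← hr]
      exact L.e_mul a
    show iZop (E.lact (G.inv γ) z) = a
    rw [← h1, ← hγ]
    exact h2

open Classical in
noncomputable def lactX (L : Gpd (LSet Γ Λ Z) (U ⊕ V)) (l : LSet Γ Λ Z)
    (x : Γ ⊕ Z) : Γ ⊕ Z :=
  if h : ∃ x', iX x' = L.mul l (iX x) then h.choose else x

open Classical in
noncomputable def ractX (L : Gpd (LSet Γ Λ Z) (U ⊕ V)) (x : Γ ⊕ Z)
    (γ : Γ) : Γ ⊕ Z :=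
  if h : ∃ x', iX x' = L.mul (iX x) (iG γ) then h.choose else x

lemma lact_spec (hL : IsLinking G H E L) (l : LSet Γ Λ Z) (x : Γ ⊕ Z)
    (h : L.s l = L.r (iX x)) : iX (lactX L l x) = L.mul l (iX x) := by
  have he : ∃ x', iX x' = L.mul l (iX x) := by
    apply closureX hL _ (sigX G E x)
    rw [L.s_mul _ _ h, sX hL x]
  rw [lactX, dif_pos he]
  exact he.choose_spec

lemma rcompX (hL : IsLinking G H E L) {x : Γ ⊕ Z} {γ : Γ}
    (h : sigX G E x = G.r γ) : L.s (iX x) = L.r (iG γ) := by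
  rw [sX hL, h, hL.rG]

lemma ract_spec (hL : IsLinking G H E L) (x : Γ ⊕ Z) (γ : Γ)
    (h : sigX G E x = G.r γ) : iX (ractX L x γ) = L.mul (iX x) (iG γ) := by
  have hc : L.s (iX x) = L.r (iG γ) := rcompX hL h
  have he : ∃ x', iX x' = L.mul (iX x) (iG γ) := by
    apply closureX hL _ (G.s γ)
    rw [L.s_mul _ _ hc, hL.sG]
  rw [ractX, dif_pos he]
  exact he.choose_spec

lemma sigma_lact (hL : IsLinking G H E L) (l : LSet Γ Λ Z) (x : Γ ⊕ Z)
    (h : L.s l = L.r (iX x)) : sigX G E (lactX L l x) = sigX G E x := by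
  have h2 : L.s (iX (lactX L l x)) = L.s (iX x) := by
    rw [lact_spec hL l x h, L.s_mul _ _ h]
  rw [sX hL, sX hL] at h2
  exact Sum.inl.inj h2

lemma sigma_ract (hL : IsLinking G H E L) (x : Γ ⊕ Z) (γ : Γ)
    (h : sigX G E x = G.r γ) : sigX G E (ractX L x γ) = G.s γ := by
  have h2 : L.s (iX (ractX L x γ)) = Sum.inl (G.s γ) := by
    rw [ract_spec hL x γ h, L.s_mul _ _ (rcompX hL h), hL.sG]
  rw [sX hL] at h2
  exact Sum.inl.inj h2

lemma rho_ract (hL : IsLinking G H E L) (x : Γ ⊕ Z) (γ : Γ)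
    (h : sigX G E x = G.r γ) : L.r (iX (ractX L x γ)) = L.r (iX x) := by
  rw [ract_spec hL x γ h, L.r_mul _ _ (rcompX hL h)]

end AuxProof

/-- For a `(G,H)`-equivalence `Z` with linking groupoid `L`, the set
`X = s_L⁻¹(G⁽⁰⁾)` equals `G ⊔ Z^op`, and with the natural left `L`-action and right
`G`-action (by multiplication in `L`), `X` is an `(L,G)`-equivalence. -/
theorem linking_equivalence {Γ : Type u} {U : Type v} {Λ : Type u} {V : Type v}
    {Z : Type w} (G : Gpd Γ U) (H : Gpd Λ V) (E : GpdEquiv G H Z)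
    (L : Gpd (LSet Γ Λ Z) (U ⊕ V)) (hL : IsLinking G H E L) :
    -- `s_L⁻¹(G⁽⁰⁾) = G ⊔ Z^op`:
    (∀ l : LSet Γ Λ Z, (∃ u : U, L.s l = Sum.inl u) ↔ ∃ x : Γ ⊕ Z, iX x = l) ∧
    -- `X` is an `(L,G)`-equivalence for the natural actions:
    ∃ EX : GpdEquiv L G (Γ ⊕ Z),
      (∀ x, EX.ρ x = L.r (iX x)) ∧
      (∀ γ : Γ, EX.σ (Sum.inl γ) = G.s γ) ∧
      (∀ z : Z, EX.σ (Sum.inr z) = E.ρ z) ∧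
      (∀ l x, L.s l = L.r (iX x) → iX (EX.lact l x) = L.mul l (iX x)) ∧
      (∀ x γ, EX.σ x = G.r γ → iX (EX.ract x γ) = L.mul (iX x) (iG γ)) := by
  constructor
  · intro l
    constructor
    · rintro ⟨u, hu⟩
      exact closureX hL l u hu
    · rintro ⟨x, rfl⟩
      exact ⟨sigX G E x, sX hL x⟩
  refine ⟨{
    ρ := fun x => L.r (iX x)
    σ := sigX G E
    lact := lactX L
    ract := ractX L
    ρ_lact := ?_
    σ_lact := ?_
    lact_e := ?_
    lact_mul := ?_
    lfree := ?_
    σ_ract := ?_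
    ρ_ract := ?_
    ract_e := ?_
    ract_mul := ?_
    rfree := ?_
    comm := ?_
    ρ_inj := ?_
    ρ_surj := ?_
    σ_inj := ?_
    σ_surj := ?_ }, fun _ => rfl, fun _ => rfl, fun _ => rfl,
    lact_spec hL, ract_spec hL⟩
  -- ρ_lact
  · intro l x h
    show L.r (iX (lactX L l x)) = L.r l
    rw [lact_spec hL l x h, L.r_mul _ _ h]
  -- σ_lact
  · intro l x h
    exact sigma_lact hL l x h
  -- lact_e
  · intro x
    show lactX L (L.e (L.r (iX x))) x = x
    apply iX_inj
    have h : L.s (L.e (L.r (iX x))) = L.r (iX x) := L.s_e _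
    rw [lact_spec hL _ _ h]
    exact L.e_mul _
  -- lact_mul
  · intro l m x h1 h2
    apply iX_inj
    have hc1 : L.s (L.mul l m) = L.r (iX x) := by rw [L.s_mul _ _ h2]; exact h1
    have hc2 : L.s l = L.r (iX (lactX L m x)) := by
      rw [lact_spec hL m x h1, L.r_mul _ _ h1]; exact h2
    rw [lact_spec hL _ _ hc1, lact_spec hL _ _ hc2, lact_spec hL m x h1,
      L.mul_assoc l m (iX x) h2 h1]
  -- lfree
  · intro l x h hfix
    replace h : L.s l = L.r (iX x) := h
    show l = L.e (L.r (iX x))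
    have key : L.mul l (iX x) = iX x := by rw [← lact_spec hL l x h, hfix]
    have hc : L.s (iX x) = L.r (L.inv (iX x)) := (L.r_inv _).symm
    calc l = L.mul l (L.e (L.s l)) := (L.mul_e l).symm
      _ = L.mul l (L.mul (iX x) (L.inv (iX x))) := by rw [h, ← L.mul_inv (iX x)]
      _ = L.mul (L.mul l (iX x)) (L.inv (iX x)) := (L.mul_assoc _ _ _ h hc).symm
      _ = L.mul (iX x) (L.inv (iX x)) := by rw [key]
      _ = L.e (L.r (iX x)) := L.mul_inv _
  -- σ_ract
  · intro x γ h
    exact sigma_ract hL x γ h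
  -- ρ_ract
  · intro x γ h
    exact rho_ract hL x γ h
  -- ract_e
  · intro x
    apply iX_inj
    have h : sigX G E x = G.r (G.e (sigX G E x)) := (G.r_e _).symm
    rw [ract_spec hL x _ h, ← hL.eU, ← sX hL x]
    exact L.mul_e _
  -- ract_mul
  · intro x γ ξ h1 h2
    apply iX_inj
    have hm : sigX G E x = G.r (G.mul γ ξ) := by rw [G.r_mul _ _ h2]; exact h1
    have h1' : sigX G E (ractX L x γ) = G.r ξ := by
      rw [sigma_ract hL x γ h1]; exact h2
    have hc1 : L.s (iX x) = L.r (iG γ) := rcompX hL h1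
    have hc2 : L.s (iG γ) = L.r (iG ξ) := by rw [hL.sG, hL.rG, h2]
    rw [ract_spec hL x _ hm, ract_spec hL _ ξ h1', ract_spec hL x γ h1,
      ← hL.mulGG γ ξ h2]
    exact (L.mul_assoc _ _ _ hc1 hc2).symm
  -- rfree
  · intro x γ h hfix
    have key : L.mul (iX x) (iG γ) = iX x := by rw [← ract_spec hL x γ h, hfix]
    have hc : L.s (iX x) = L.r (iG γ) := rcompX hL h
    have hiG : (iG γ : LSet Γ Λ Z) = iG (G.e (sigX G E x)) := by
      calc iG γ = L.mul (L.e (L.r (iG γ))) (iG γ) := (L.e_mul _).symm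
        _ = L.mul (L.mul (L.inv (iX x)) (iX x)) (iG γ) := by
            rw [← hc, ← L.inv_mul (iX x)]
        _ = L.mul (L.inv (iX x)) (L.mul (iX x) (iG γ)) :=
            L.mul_assoc _ _ _ (L.s_inv _) hc
        _ = L.mul (L.inv (iX x)) (iX x) := by rw [key]
        _ = L.e (L.s (iX x)) := L.inv_mul _
        _ = iG (G.e (sigX G E x)) := by rw [sX hL x, hL.eU]
    exact Sum.inl.inj (Sum.inl.inj hiG)
  -- comm
  · intro l x γ h1 h2
    apply iX_inj
    have hσ : sigX G E (lactX L l x) = G.r γ := by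
      rw [sigma_lact hL l x h1]; exact h2
    have hρ : L.s l = L.r (iX (ractX L x γ)) := by
      rw [rho_ract hL x γ h2]; exact h1
    rw [ract_spec hL _ γ hσ, lact_spec hL l x h1, lact_spec hL l _ hρ,
      ract_spec hL x γ h2]
    exact L.mul_assoc _ _ _ h1 (rcompX hL h2)
  -- ρ_inj
  · intro x x' h
    replace h : L.r (iX x) = L.r (iX x') := h
    have hc : L.s (L.inv (iX x)) = L.r (iX x') := by rw [L.s_inv]; exact h
    have hsrc : L.s (L.mul (L.inv (iX x)) (iX x')) = Sum.inl (sigX G E x') := by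
      rw [L.s_mul _ _ hc, sX hL]
    have hrng : L.r (L.mul (L.inv (iX x)) (iX x')) = Sum.inl (sigX G E x) := by
      rw [L.r_mul _ _ hc, L.r_inv, sX hL]
    obtain ⟨γ, hγ⟩ := hL.fullG _ _ _ hrng hsrc
    have hσγ : sigX G E x = G.r γ := by
      rw [hγ, hL.rG] at hrng
      exact (Sum.inl.inj hrng).symm
    refine ⟨γ, hσγ, ?_⟩
    apply iX_inj
    have hca : L.s (iX x) = L.r (L.inv (iX x)) := (L.r_inv _).symm
    rw [ract_spec hL x γ hσγ, ← hγ, ← L.mul_assoc _ _ _ hca hc, L.mul_inv, h]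
    exact L.e_mul _
  -- ρ_surj
  · intro w
    rcases w with u | v
    · refine ⟨Sum.inl (G.e u), ?_⟩
      show L.r (iG (G.e u)) = Sum.inl u
      rw [hL.rG, G.r_e]
    · obtain ⟨z, hz⟩ := E.σ_surj v
      refine ⟨Sum.inr z, ?_⟩
      show L.r (iZop z) = Sum.inr v
      rw [hL.rZop, hz]
  -- σ_inj
  · intro x x' h
    have hc : L.s (iX x') = L.r (L.inv (iX x)) := by
      rw [L.r_inv, sX hL, sX hL, h]
    refine ⟨L.mul (iX x') (L.inv (iX x)), ?_, ?_⟩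
    · show L.s _ = L.r (iX x)
      rw [L.s_mul _ _ hc, L.s_inv]
    · apply iX_inj
      have hl : L.s (L.mul (iX x') (L.inv (iX x))) = L.r (iX x) := by
        rw [L.s_mul _ _ hc, L.s_inv]
      rw [lact_spec hL _ x hl, L.mul_assoc _ _ _ hc (L.s_inv _), L.inv_mul,
        sX hL x, h, ← sX hL x']
      exact L.mul_e _
  -- σ_surj
  · intro u
    exact ⟨Sum.inl (G.e u), G.s_e u⟩
end
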